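/- There exist universal constants C > 0 and ε₀ ∈ (0,1) such that for every ε ∈ (0, ε₀) there exists a real polynomial F of degree at most C·log(1/ε) satisfying: (1) |F(x)| ≤ 1 for all x ∈ [−1, 1]; and (2) |F(x) − arcsin(x)| ≤ ε for all x ∈ [−1/π, 1/π]. -/

import Mathlib

open Polynomial

namespace ArcsinApprox
open Finset


/-- Taylor coefficients of `(1-u)^(-1/2)`. -/
noncomputable def aa : ℕ → ℝ
  | 0 => 1
  | n + 1 => aa n * (2 * n + 1) / (2 * n + 2)

lemma aa_zero : aa 0 = 1 := rfl

lemma aa_succ (n : ℕ) : aa (n + 1) = aa n * (2 * n + 1) / (2 * n + 2) := rfl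

lemma aa_pos (n : ℕ) : 0 < aa n := by
  induction n with
  | zero => norm_num [aa_zero]
  | succ n ih => rw [aa_succ]; positivity

lemma aa_le_one (n : ℕ) : aa n ≤ 1 := by
  induction n with
  | zero => simp [aa_zero]
  | succ n ih =>
    rw [aa_succ, div_le_one (by positivity)]
    nlinarith [aa_pos n]

lemma aa_rec (n : ℕ) : (2 * (n : ℝ) + 2) * aa (n + 1) = (2 * (n : ℝ) + 1) * aa n := by
  rw [aa_succ]
  field_simp

/-- The Cauchy-product coefficients of the squared series. -/
noncomputable def cc (n : ℕ) : ℝ := ∑ p ∈ Finset.HasAntidiagonal.antidiagonal n, aa p.1 * aa p.2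

lemma sum_swap_aux (m : ℕ) (g : ℕ → ℝ) :
    ∑ p ∈ Finset.HasAntidiagonal.antidiagonal m, g p.2 * (aa p.1 * aa p.2)
      = ∑ p ∈ Finset.HasAntidiagonal.antidiagonal m, g p.1 * (aa p.1 * aa p.2) := by
  have := Finset.Nat.sum_antidiagonal_swap
    (n := m) (f := fun p => g p.1 * (aa p.2 * aa p.1))
  simp only [Prod.fst_swap, Prod.snd_swap] at this
  rw [show (∑ p ∈ Finset.HasAntidiagonal.antidiagonal m, g p.2 * (aa p.1 * aa p.2))
      = ∑ p ∈ Finset.HasAntidiagonal.antidiagonal m, g p.2 * (aa p.1 * aa p.2) from rfl]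
  calc ∑ p ∈ Finset.HasAntidiagonal.antidiagonal m, g p.2 * (aa p.1 * aa p.2)
      = ∑ p ∈ Finset.HasAntidiagonal.antidiagonal m, g p.1 * (aa p.2 * aa p.1) := this
    _ = ∑ p ∈ Finset.HasAntidiagonal.antidiagonal m, g p.1 * (aa p.1 * aa p.2) := by
        refine Finset.sum_congr rfl fun p _ => by ring

lemma cc_eq_one (n : ℕ) : cc n = 1 := by
  induction n with
  | zero => simp [cc, aa_zero]
  | succ n ih =>
    have key : ((n : ℝ) + 1) * cc (n + 1) = ((n : ℝ) + 1) * cc n := by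
      have h1 : ((n : ℝ) + 1) * cc (n + 1)
          = ∑ p ∈ Finset.HasAntidiagonal.antidiagonal (n + 1), ((p.1 : ℝ) + (p.2 : ℝ)) * (aa p.1 * aa p.2) := by
        rw [cc, Finset.mul_sum]
        refine Finset.sum_congr rfl fun p hp => ?_
        have h := Finset.HasAntidiagonal.mem_antidiagonal.mp hp
        have hc : ((p.1 : ℝ) + p.2) = (n : ℝ) + 1 := by exact_mod_cast congrArg (Nat.cast (R := ℝ)) h
        rw [hc]
      have h2 : ((n : ℝ) + 1) * cc (n + 1)
          = 2 * ∑ p ∈ Finset.HasAntidiagonal.antidiagonal (n + 1), ((p.1 : ℝ)) * (aa p.1 * aa p.2) := by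
        rw [h1]
        have he : ∀ p : ℕ × ℕ, ((p.1 : ℝ) + (p.2 : ℝ)) * (aa p.1 * aa p.2)
            = (p.1 : ℝ) * (aa p.1 * aa p.2) + (p.2 : ℝ) * (aa p.1 * aa p.2) := fun p => by ring
        rw [Finset.sum_congr rfl fun p _ => he p, Finset.sum_add_distrib,
          sum_swap_aux (n + 1) (fun i => (i : ℝ))]
        ring
      have h3 : ∑ p ∈ Finset.HasAntidiagonal.antidiagonal (n + 1), ((p.1 : ℝ)) * (aa p.1 * aa p.2)
          = ∑ p ∈ Finset.HasAntidiagonal.antidiagonal n, (((p.1 : ℝ) + 1)) * (aa (p.1 + 1) * aa p.2) := by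
        rw [Finset.Nat.sum_antidiagonal_succ
          (f := fun p => ((p.1 : ℝ)) * (aa p.1 * aa p.2))]
        push_cast
        simp
      have h4 : 2 * ∑ p ∈ Finset.HasAntidiagonal.antidiagonal n, (((p.1 : ℝ) + 1)) * (aa (p.1 + 1) * aa p.2)
          = ∑ p ∈ Finset.HasAntidiagonal.antidiagonal n, ((2 * (p.1 : ℝ) + 1)) * (aa p.1 * aa p.2) := by
        rw [Finset.mul_sum]
        refine Finset.sum_congr rfl fun p _ => ?_
        have h := aa_rec p.1
        linear_combination aa p.2 * h
      have h5 : ∑ p ∈ Finset.HasAntidiagonal.antidiagonal n, ((2 * (p.1 : ℝ) + 1)) * (aa p.1 * aa p.2)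
          = ((n : ℝ) + 1) * cc n := by
        have hs := sum_swap_aux n (fun i => 2 * (i : ℝ) + 1)
        have hsum : ∑ p ∈ Finset.HasAntidiagonal.antidiagonal n, ((2 * (p.1 : ℝ) + 1)) * (aa p.1 * aa p.2)
              + ∑ p ∈ Finset.HasAntidiagonal.antidiagonal n, ((2 * (p.2 : ℝ) + 1)) * (aa p.1 * aa p.2)
            = (2 * (n : ℝ) + 2) * cc n := by
          rw [cc, Finset.mul_sum, ← Finset.sum_add_distrib]
          refine Finset.sum_congr rfl fun p hp => ?_
          have h := Finset.HasAntidiagonal.mem_antidiagonal.mp hp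
          have hc : ((p.1 : ℝ) + p.2) = (n : ℝ) := by exact_mod_cast congrArg (Nat.cast (R := ℝ)) h
          linear_combination (2 * aa p.1 * aa p.2) * hc
        rw [hs] at hsum
        linarith
      rw [h2, h3, h4, h5]
    have hne : ((n : ℝ) + 1) ≠ 0 := by positivity
    have := mul_left_cancel₀ hne key
    rw [this, ih]

/-- Partial sums of the binomial series for `(1-u)^(-1/2)`. -/
noncomputable def SS (d : ℕ) (u : ℝ) : ℝ := ∑ n ∈ range (d + 1), aa n * u ^ n

lemma SS_ge_one {d : ℕ} {u : ℝ} (h0 : 0 ≤ u) : 1 ≤ SS d u := by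
  have hnn : ∀ i ∈ range (d + 1), 0 ≤ aa i * u ^ i := fun i _ =>
    mul_nonneg (aa_pos i).le (by positivity)
  have h := Finset.single_le_sum hnn (Finset.mem_range.mpr (Nat.succ_pos d))
  simpa [aa_zero, SS] using h

lemma SS_nonneg {d : ℕ} {u : ℝ} (h0 : 0 ≤ u) : 0 ≤ SS d u :=
  le_trans zero_le_one (SS_ge_one h0)

/-- Square set and triangle set for the Cauchy product comparison. -/
noncomputable def sqSet (d : ℕ) : Finset (ℕ × ℕ) := range (d + 1) ×ˢ range (d + 1)

noncomputable def triSet (d : ℕ) : Finset (ℕ × ℕ) :=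
  (range (2 * d + 1)).biUnion (fun n => Finset.HasAntidiagonal.antidiagonal n)

lemma triSet_disj (d : ℕ) : Set.PairwiseDisjoint ↑(range (2 * d + 1))
    (fun n => (Finset.HasAntidiagonal.antidiagonal n : Finset (ℕ × ℕ))) := by
  intro i _ j _ hij
  refine Finset.disjoint_left.mpr fun p hpi hpj => ?_
  have h1 := Finset.HasAntidiagonal.mem_antidiagonal.mp hpi
  have h2 := Finset.HasAntidiagonal.mem_antidiagonal.mp hpj
  exact hij (h1 ▸ h2 ▸ rfl)

lemma sq_subset_tri (d : ℕ) : sqSet d ⊆ triSet d := by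
  intro p hp
  rw [sqSet, Finset.mem_product, Finset.mem_range, Finset.mem_range] at hp
  refine Finset.mem_biUnion.mpr ⟨p.1 + p.2, Finset.mem_range.mpr (by omega), ?_⟩
  exact Finset.HasAntidiagonal.mem_antidiagonal.mpr rfl

lemma SS_sq_eq (d : ℕ) (u : ℝ) :
    (SS d u) ^ 2 = ∑ p ∈ sqSet d, (aa p.1 * aa p.2) * u ^ (p.1 + p.2) := by
  rw [sq, SS, Finset.sum_mul_sum, sqSet, Finset.sum_product]
  refine Finset.sum_congr rfl fun i _ => Finset.sum_congr rfl fun j _ => ?_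
  rw [pow_add]; ring

lemma tri_sum_eq (d : ℕ) (u : ℝ) :
    ∑ p ∈ triSet d, (aa p.1 * aa p.2) * u ^ (p.1 + p.2)
      = ∑ n ∈ range (2 * d + 1), u ^ n := by
  rw [triSet, Finset.sum_biUnion (triSet_disj d)]
  refine Finset.sum_congr rfl fun n _ => ?_
  have h : ∑ p ∈ Finset.HasAntidiagonal.antidiagonal n, (aa p.1 * aa p.2) * u ^ (p.1 + p.2)
      = ∑ p ∈ Finset.HasAntidiagonal.antidiagonal n, (aa p.1 * aa p.2) * u ^ n := by
    refine Finset.sum_congr rfl fun p hp => ?_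
    rw [Finset.HasAntidiagonal.mem_antidiagonal.mp hp]
  rw [h, ← Finset.sum_mul]
  rw [show (∑ p ∈ Finset.HasAntidiagonal.antidiagonal n, aa p.1 * aa p.2) = cc n from rfl, cc_eq_one, one_mul]

lemma geom_gap {u : ℝ} (h1 : u ≠ 1) (k : ℕ) :
    1 / (1 - u) - ∑ n ∈ range k, u ^ n = u ^ k / (1 - u) := by
  have hne : 1 - u ≠ 0 := fun h => h1 (by linarith)
  rw [eq_div_iff hne, sub_mul, one_div_mul_cancel hne]
  linear_combination geom_sum_mul u k

lemma geom_lemma {u : ℝ} (h0 : 0 ≤ u) (h1 : u < 1) (k : ℕ) :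
    ∑ n ∈ range k, u ^ n ≤ 1 / (1 - u) := by
  have h := geom_gap (ne_of_lt h1) k
  have h2 : (0:ℝ) ≤ u ^ k / (1 - u) := by
    apply div_nonneg (by positivity); linarith
  linarith

lemma SS_sq_le {d : ℕ} {u : ℝ} (h0 : 0 ≤ u) (h1 : u < 1) :
    (SS d u) ^ 2 ≤ 1 / (1 - u) := by
  rw [SS_sq_eq]
  calc ∑ p ∈ sqSet d, (aa p.1 * aa p.2) * u ^ (p.1 + p.2)
      ≤ ∑ p ∈ triSet d, (aa p.1 * aa p.2) * u ^ (p.1 + p.2) := by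
        refine Finset.sum_le_sum_of_subset_of_nonneg (sq_subset_tri d) fun p _ _ => ?_
        have := aa_pos p.1; have := aa_pos p.2; positivity
    _ = ∑ n ∈ range (2 * d + 1), u ^ n := tri_sum_eq d u
    _ ≤ 1 / (1 - u) := geom_lemma h0 h1 _

lemma claimA {d : ℕ} {u : ℝ} (h0 : 0 ≤ u) (h1 : u < 1) :
    SS d u ≤ 1 / Real.sqrt (1 - u) := by
  have hu : (0:ℝ) < 1 - u := by linarith
  have hs : 0 < Real.sqrt (1 - u) := Real.sqrt_pos.mpr hu
  rw [le_div_iff₀ hs]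
  have h2 : (SS d u * Real.sqrt (1 - u)) ^ 2 ≤ 1 := by
    rw [mul_pow, Real.sq_sqrt hu.le]
    have := SS_sq_le (d := d) h0 h1
    calc SS d u ^ 2 * (1 - u) ≤ (1 / (1 - u)) * (1 - u) := by
          exact mul_le_mul_of_nonneg_right this hu.le
      _ = 1 := by field_simp
  nlinarith [mul_nonneg (SS_nonneg (d := d) h0) hs.le]

lemma claimB {d : ℕ} {u : ℝ} (h0 : 0 ≤ u) (h1 : u ≤ 1 / 9) :
    1 / Real.sqrt (1 - u) - SS d u ≤ ((2 * (d:ℝ) + 3) ^ 2) * u ^ (d + 1) := by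
  have hu1 : u < 1 := by linarith
  have hu : (0:ℝ) < 1 - u := by linarith
  -- gap between 1/(1-u) and SS^2
  have hgap : 1 / (1 - u) - (SS d u) ^ 2 ≤ ((2 * (d:ℝ) + 1) ^ 2 + 2) * u ^ (d + 1) := by
    have htri : ∑ n ∈ range (2 * d + 1), u ^ n - (SS d u) ^ 2
        ≤ ((2 * (d:ℝ) + 1) ^ 2) * u ^ (d + 1) := by
      rw [SS_sq_eq, ← tri_sum_eq d u, ← Finset.sum_sdiff (sq_subset_tri d)]
      have hterm : ∀ p ∈ triSet d \ sqSet d,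
          (aa p.1 * aa p.2) * u ^ (p.1 + p.2) ≤ u ^ (d + 1) := by
        intro p hp
        rw [Finset.mem_sdiff] at hp
        obtain ⟨hpt, hps⟩ := hp
        have hsum_le : p.1 + p.2 ≤ 2 * d := by
          rw [triSet, Finset.mem_biUnion] at hpt
          obtain ⟨n, hn, hpn⟩ := hpt
          rw [Finset.mem_range] at hn
          rw [Finset.HasAntidiagonal.mem_antidiagonal.mp hpn]; omega
        have hsum_ge : d + 1 ≤ p.1 + p.2 := by
          rw [sqSet, Finset.mem_product, Finset.mem_range, Finset.mem_range] at hps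
          push_neg at hps
          by_contra hcon
          push_neg at hcon
          omega
        have h1 : u ^ (p.1 + p.2) ≤ u ^ (d + 1) :=
          pow_le_pow_of_le_one h0 hu1.le hsum_ge
        have h2 : aa p.1 * aa p.2 ≤ 1 := by
          have := aa_pos p.1; have := aa_pos p.2
          have := aa_le_one p.1; have := aa_le_one p.2
          nlinarith
        have h3 : (0:ℝ) ≤ u ^ (p.1 + p.2) := by positivity
        nlinarith
      calc ∑ p ∈ triSet d \ sqSet d, (aa p.1 * aa p.2) * u ^ (p.1 + p.2)
            + ∑ p ∈ sqSet d, (aa p.1 * aa p.2) * u ^ (p.1 + p.2)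
            - ∑ p ∈ sqSet d, (aa p.1 * aa p.2) * u ^ (p.1 + p.2)
          = ∑ p ∈ triSet d \ sqSet d, (aa p.1 * aa p.2) * u ^ (p.1 + p.2) := by ring
        _ ≤ ∑ _p ∈ triSet d \ sqSet d, u ^ (d + 1) := Finset.sum_le_sum hterm
        _ = (triSet d \ sqSet d).card * u ^ (d + 1) := by
            rw [Finset.sum_const, nsmul_eq_mul]
        _ ≤ ((2 * (d:ℝ) + 1) ^ 2) * u ^ (d + 1) := by
            have hcard : ((triSet d \ sqSet d).card : ℝ) ≤ (2 * (d:ℝ) + 1) ^ 2 := by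
              have h1 : (triSet d \ sqSet d).card ≤ (triSet d).card :=
                Finset.card_le_card (Finset.sdiff_subset)
              have h2 : (triSet d).card ≤ (2 * d + 1) * (2 * d + 1) := by
                rw [triSet]
                calc ((range (2 * d + 1)).biUnion fun n => Finset.HasAntidiagonal.antidiagonal n).card
                    ≤ ∑ n ∈ range (2 * d + 1), (Finset.HasAntidiagonal.antidiagonal n).card :=
                      Finset.card_biUnion_le
                  _ ≤ ∑ _n ∈ range (2 * d + 1), (2 * d + 1) := by
                      refine Finset.sum_le_sum fun n hn => ?_
                      rw [Finset.Nat.card_antidiagonal]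
                      rw [Finset.mem_range] at hn; omega
                  _ = (2 * d + 1) * (2 * d + 1) := by
                      rw [Finset.sum_const, smul_eq_mul, Finset.card_range]
              have : ((triSet d \ sqSet d).card : ℝ) ≤ ((2 * d + 1) * (2 * d + 1) : ℕ) := by
                exact_mod_cast le_trans h1 h2
              calc ((triSet d \ sqSet d).card : ℝ) ≤ ((2 * d + 1) * (2 * d + 1) : ℕ) := this
                _ = (2 * (d:ℝ) + 1) ^ 2 := by push_cast; ring
            have : (0:ℝ) ≤ u ^ (d + 1) := by positivity
            nlinarith
    have htail : 1 / (1 - u) - ∑ n ∈ range (2 * d + 1), u ^ n ≤ 2 * u ^ (d + 1) := by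
      rw [geom_gap (ne_of_lt hu1) (2 * d + 1)]
      have h9 : 1 / (1 - u) ≤ 2 := by
        rw [div_le_iff₀ hu]; linarith
      have hp : u ^ (2 * d + 1) ≤ u ^ (d + 1) := pow_le_pow_of_le_one h0 hu1.le (by omega)
      have hpn : (0:ℝ) ≤ u ^ (2 * d + 1) := by positivity
      calc u ^ (2 * d + 1) / (1 - u) = u ^ (2 * d + 1) * (1 / (1 - u)) := by ring
        _ ≤ u ^ (d + 1) * 2 := by
            apply mul_le_mul hp h9 (by positivity) (by positivity)
        _ = 2 * u ^ (d + 1) := by ring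
    nlinarith [htri, htail]
  -- convert to sqrt gap
  have hA : SS d u ≤ 1 / Real.sqrt (1 - u) := claimA h0 hu1
  have hB1 : 1 ≤ SS d u := SS_ge_one h0
  have hsq : (1 / Real.sqrt (1 - u)) ^ 2 = 1 / (1 - u) := by
    rw [div_pow, one_pow, Real.sq_sqrt hu.le]
  have key : 1 / Real.sqrt (1 - u) - SS d u ≤ 1 / (1 - u) - (SS d u) ^ 2 := by
    nlinarith [hA, hB1, hsq]
  have : ((2 * (d:ℝ) + 1) ^ 2 + 2) ≤ (2 * (d:ℝ) + 3) ^ 2 := by nlinarith [Nat.cast_nonneg (α := ℝ) d]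
  have hun : (0:ℝ) ≤ u ^ (d + 1) := by positivity
  nlinarith [hgap]

/-- Evaluated truncated Taylor series of arcsin. -/
noncomputable def pp (d : ℕ) (x : ℝ) : ℝ :=
  ∑ n ∈ range (d + 1), aa n / (2 * n + 1) * x ^ (2 * n + 1)

lemma pp_zero (d : ℕ) : pp d 0 = 0 := by
  simp [pp]

lemma pp_odd (d : ℕ) (x : ℝ) : pp d (-x) = -pp d x := by
  rw [pp, pp, ← Finset.sum_neg_distrib]
  refine Finset.sum_congr rfl fun n _ => ?_
  have h : Odd (2 * n + 1) := ⟨n, by ring⟩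
  rw [h.neg_pow]
  ring

lemma pp_nonneg {d : ℕ} {x : ℝ} (hx : 0 ≤ x) : 0 ≤ pp d x := by
  refine Finset.sum_nonneg fun n _ => ?_
  have := aa_pos n
  positivity

lemma pp_abs (d : ℕ) (x : ℝ) : |pp d x| = pp d |x| := by
  rcases le_or_gt 0 x with h | h
  · rw [abs_of_nonneg h, abs_of_nonneg (pp_nonneg h)]
  · have hx : 0 ≤ -x := by linarith
    calc |pp d x| = |pp d (-(-x))| := by rw [neg_neg]
      _ = |-pp d (-x)| := by rw [pp_odd]
      _ = pp d (-x) := by rw [abs_neg, abs_of_nonneg (pp_nonneg hx)]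
      _ = pp d |x| := by rw [abs_of_neg h]

lemma pp_le_card {d : ℕ} {x : ℝ} (hx : |x| ≤ 1) : |pp d x| ≤ (d : ℝ) + 1 := by
  rw [pp_abs]
  have h0 : 0 ≤ |x| := abs_nonneg x
  calc pp d |x| = ∑ n ∈ range (d + 1), aa n / (2 * n + 1) * |x| ^ (2 * n + 1) := rfl
    _ ≤ ∑ _n ∈ range (d + 1), (1:ℝ) := by
        refine Finset.sum_le_sum fun n _ => ?_
        have h1 : aa n / (2 * (n:ℝ) + 1) ≤ 1 := by
          rw [div_le_one (by positivity)]
          have := aa_le_one n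
          have : (1:ℝ) ≤ 2 * (n:ℝ) + 1 := by
            have := Nat.cast_nonneg (α := ℝ) n; linarith
          linarith [aa_le_one n]
        have h2 : |x| ^ (2 * n + 1) ≤ 1 := pow_le_one₀ h0 hx
        have h3 : (0:ℝ) ≤ aa n / (2 * (n:ℝ) + 1) := by
          have := (aa_pos n).le; positivity
        nlinarith [pow_nonneg h0 (2 * n + 1)]
    _ = ((d + 1 : ℕ) : ℝ) := by simp
    _ = (d : ℝ) + 1 := by push_cast; ring

lemma pp_hasDerivAt (d : ℕ) (x : ℝ) : HasDerivAt (pp d) (SS d (x ^ 2)) x := by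
  have h : SS d (x ^ 2) = ∑ n ∈ range (d + 1),
      (aa n / (2 * (n:ℝ) + 1)) * ((2 * n + 1 : ℕ) * x ^ (2 * n + 1 - 1)) := by
    rw [SS]
    refine Finset.sum_congr rfl fun n _ => ?_
    have h1 : (2 * n + 1 - 1) = 2 * n := by omega
    rw [h1, ← pow_mul]
    have h2 : (2 * (n:ℝ) + 1) ≠ 0 := by positivity
    push_cast
    field_simp
  rw [h]
  exact HasDerivAt.fun_sum fun n _ =>
    (hasDerivAt_pow (2 * n + 1) x).const_mul (aa n / (2 * (n:ℝ) + 1))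

/-- `arcsin x - pp d x` has derivative `1/√(1-x²) - SS d x²` for `|x| < 1`. -/
lemma err_hasDerivAt (d : ℕ) {x : ℝ} (h1 : -1 < x) (h2 : x < 1) :
    HasDerivAt (fun y => Real.arcsin y - pp d y)
      (1 / Real.sqrt (1 - x ^ 2) - SS d (x ^ 2)) x :=
  (Real.hasDerivAt_arcsin (by linarith) (by linarith)).sub (pp_hasDerivAt d x)

/-- Generic monotonicity helper on `[0, b]`. -/
lemma mono_aux {f f' : ℝ → ℝ} {b : ℝ} (hb : 0 < b)
    (hd : ∀ x ∈ Set.Icc (0:ℝ) b, HasDerivAt f (f' x) x)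
    (h0 : ∀ x ∈ Set.Icc (0:ℝ) b, 0 ≤ f' x) :
    ∀ x ∈ Set.Icc (0:ℝ) b, f 0 ≤ f x := by
  have hmono : MonotoneOn f (Set.Icc (0:ℝ) b) := by
    refine monotoneOn_of_deriv_nonneg (convex_Icc _ _) ?_ ?_ ?_
    · exact fun x hx => ((hd x hx).continuousAt).continuousWithinAt
    · intro x hx
      have hx' : x ∈ Set.Icc (0:ℝ) b := interior_subset hx
      exact ((hd x hx').differentiableAt).differentiableWithinAt
    · intro x hx
      have hx' : x ∈ Set.Icc (0:ℝ) b := interior_subset hx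
      rw [(hd x hx').deriv]
      exact h0 x hx'
  intro x hx
  exact hmono (Set.left_mem_Icc.mpr hb.le) hx hx.1

lemma pp_le_arcsin (d : ℕ) : ∀ x ∈ Set.Icc (0:ℝ) (3/4), pp d x ≤ Real.arcsin x := by
  have h := mono_aux (f := fun y => Real.arcsin y - pp d y)
    (f' := fun y => 1 / Real.sqrt (1 - y ^ 2) - SS d (y ^ 2))
    (b := 3/4) (by norm_num) ?_ ?_
  · intro x hx
    have := h x hx
    simp only [Real.arcsin_zero, pp_zero, sub_zero] at this
    linarith
  · intro x hx
    exact err_hasDerivAt d (by linarith [hx.1]) (by linarith [hx.2])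
  · intro x hx
    have hu0 : (0:ℝ) ≤ x ^ 2 := sq_nonneg x
    have hu1 : x ^ 2 < 1 := by nlinarith [hx.1, hx.2]
    have := claimA (d := d) hu0 hu1
    linarith

lemma arcsin_sub_pp_le (d : ℕ) :
    ∀ x ∈ Set.Icc (0:ℝ) (1/3),
      Real.arcsin x - pp d x ≤ (2 * (d:ℝ) + 3) ^ 2 * (1/9) ^ (d + 1) := by
  set M : ℝ := (2 * (d:ℝ) + 3) ^ 2 * (1/9) ^ (d + 1) with hM
  have hMpos : 0 ≤ M := by positivity
  have h := mono_aux (f := fun y => M * y - (Real.arcsin y - pp d y))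
    (f' := fun y => M - (1 / Real.sqrt (1 - y ^ 2) - SS d (y ^ 2)))
    (b := 1/3) (by norm_num) ?_ ?_
  · intro x hx
    have h2 := h x hx
    simp only [Real.arcsin_zero, pp_zero, mul_zero, sub_zero, zero_sub, neg_zero] at h2
    have hx1 : x ≤ 1/3 := hx.2
    nlinarith [h2, hMpos]
  · intro x hx
    have hder := ((hasDerivAt_id x).const_mul M).fun_sub
      (err_hasDerivAt d (by linarith [hx.1]) (by linarith [hx.2]))
    simpa using hder
  · intro x hx
    have hu0 : (0:ℝ) ≤ x ^ 2 := sq_nonneg x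
    have hu9 : x ^ 2 ≤ 1/9 := by nlinarith [hx.1, hx.2]
    have hcb := claimB (d := d) hu0 hu9
    have hpow : (x ^ 2) ^ (d + 1) ≤ (1/9 : ℝ) ^ (d + 1) := pow_le_pow_left₀ hu0 hu9 _
    have hco : (0:ℝ) ≤ (2 * (d:ℝ) + 3) ^ 2 := by positivity
    have : (2 * (d:ℝ) + 3) ^ 2 * (x ^ 2) ^ (d + 1) ≤ M := by
      rw [hM]; exact mul_le_mul_of_nonneg_left hpow hco
    linarith

/-- The "amplification" window sum. -/
noncomputable def AA (m : ℕ) (t : ℝ) : ℝ :=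
  ∑ j ∈ Finset.Ico (m + 1) (2 * m + 1), ((2 * m).choose j : ℝ) * t ^ j * (1 - t) ^ (2 * m - j)

lemma binom_sum (m : ℕ) (t : ℝ) :
    ∑ j ∈ range (2 * m + 1), ((2 * m).choose j : ℝ) * t ^ j * (1 - t) ^ (2 * m - j) = 1 := by
  have h := add_pow (t) (1 - t) (2 * m)
  rw [show t + (1 - t) = 1 by ring, one_pow] at h
  calc ∑ j ∈ range (2 * m + 1), ((2 * m).choose j : ℝ) * t ^ j * (1 - t) ^ (2 * m - j)
      = ∑ j ∈ range (2 * m + 1), t ^ j * (1 - t) ^ (2 * m - j) * ((2 * m).choose j : ℝ) :=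
        Finset.sum_congr rfl fun k _ => by ring
    _ = 1 := h.symm

lemma Ico_subset_range (m : ℕ) : Finset.Ico (m + 1) (2 * m + 1) ⊆ range (2 * m + 1) := by
  intro j hj
  rw [Finset.mem_Ico] at hj
  exact Finset.mem_range.mpr hj.2

lemma AA_nonneg {m : ℕ} {t : ℝ} (h0 : 0 ≤ t) (h1 : t ≤ 1) : 0 ≤ AA m t := by
  refine Finset.sum_nonneg fun j _ => ?_
  have : (0:ℝ) ≤ 1 - t := by linarith
  positivity

lemma AA_le_one {m : ℕ} {t : ℝ} (h0 : 0 ≤ t) (h1 : t ≤ 1) : AA m t ≤ 1 := by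
  rw [← binom_sum m t]
  refine Finset.sum_le_sum_of_subset_of_nonneg (Ico_subset_range m) fun j _ _ => ?_
  have : (0:ℝ) ≤ 1 - t := by linarith
  positivity

lemma term_le_mid_high {m j : ℕ} {t : ℝ} (h0 : 0 ≤ t) (ht : t ≤ 1/2)
    (hj1 : m ≤ j) (hj2 : j ≤ 2 * m) :
    t ^ j * (1 - t) ^ (2 * m - j) ≤ t ^ m * (1 - t) ^ m := by
  have h1t : (0:ℝ) ≤ 1 - t := by linarith
  have htle : t ≤ 1 - t := by linarith
  have e1 : t ^ j = t ^ m * t ^ (j - m) := by rw [← pow_add]; congr 1; omega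
  have e2 : (1 - t) ^ m = (1 - t) ^ (2 * m - j) * (1 - t) ^ (j - m) := by
    rw [← pow_add]; congr 1; omega
  rw [e1, e2]
  have hk : t ^ (j - m) ≤ (1 - t) ^ (j - m) := pow_le_pow_left₀ h0 htle _
  calc t ^ m * t ^ (j - m) * (1 - t) ^ (2 * m - j)
      ≤ t ^ m * (1 - t) ^ (j - m) * (1 - t) ^ (2 * m - j) :=
        mul_le_mul_of_nonneg_right (mul_le_mul_of_nonneg_left hk (pow_nonneg h0 m))
          (pow_nonneg h1t _)
    _ = t ^ m * ((1 - t) ^ (2 * m - j) * (1 - t) ^ (j - m)) := by ring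

lemma term_le_mid_low {m j : ℕ} {t : ℝ} (ht : 1/2 ≤ t) (h1 : t ≤ 1)
    (hj2 : j ≤ m) :
    t ^ j * (1 - t) ^ (2 * m - j) ≤ t ^ m * (1 - t) ^ m := by
  have h1t : (0:ℝ) ≤ 1 - t := by linarith
  have h0 : (0:ℝ) ≤ t := by linarith
  have htle : 1 - t ≤ t := by linarith
  have e1 : t ^ m = t ^ j * t ^ (m - j) := by rw [← pow_add]; congr 1; omega
  have e2 : (1 - t) ^ (2 * m - j) = (1 - t) ^ m * (1 - t) ^ (m - j) := by
    rw [← pow_add]; congr 1; omega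
  rw [e1, e2]
  have hk : (1 - t) ^ (m - j) ≤ t ^ (m - j) := pow_le_pow_left₀ h1t htle _
  calc t ^ j * ((1 - t) ^ m * (1 - t) ^ (m - j))
      ≤ t ^ j * ((1 - t) ^ m * t ^ (m - j)) :=
        mul_le_mul_of_nonneg_left (mul_le_mul_of_nonneg_left hk (pow_nonneg h1t m))
          (pow_nonneg h0 j)
    _ = t ^ j * t ^ (m - j) * (1 - t) ^ m := by ring

lemma choose_sum_le (m : ℕ) (s : Finset ℕ) (hs : s ⊆ range (2 * m + 1)) :
    ∑ j ∈ s, ((2 * m).choose j : ℝ) ≤ (4 : ℝ) ^ m := by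
  calc ∑ j ∈ s, ((2 * m).choose j : ℝ)
      ≤ ∑ j ∈ range (2 * m + 1), ((2 * m).choose j : ℝ) := by
        refine Finset.sum_le_sum_of_subset_of_nonneg hs fun j _ _ => by positivity
    _ = ((∑ j ∈ range (2 * m + 1), (2 * m).choose j : ℕ) : ℝ) := by push_cast; rfl
    _ = ((2 : ℕ) ^ (2 * m) : ℕ) := by rw [Nat.sum_range_choose]
    _ = (4 : ℝ) ^ m := by push_cast; rw [pow_mul]; norm_num

lemma AA_le_pow {m : ℕ} {t : ℝ} (h0 : 0 ≤ t) (ht : t ≤ 1/2) :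
    AA m t ≤ (4 * (t * (1 - t))) ^ m := by
  have h1t : (0:ℝ) ≤ 1 - t := by linarith
  calc AA m t ≤ ∑ j ∈ Finset.Ico (m + 1) (2 * m + 1),
        ((2 * m).choose j : ℝ) * (t ^ m * (1 - t) ^ m) := by
        refine Finset.sum_le_sum fun j hj => ?_
        rw [Finset.mem_Ico] at hj
        rw [mul_assoc]
        refine mul_le_mul_of_nonneg_left ?_ (by positivity)
        exact term_le_mid_high h0 ht (by omega) (by omega)
    _ = (∑ j ∈ Finset.Ico (m + 1) (2 * m + 1), ((2 * m).choose j : ℝ)) * (t ^ m * (1 - t) ^ m) := by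
        rw [Finset.sum_mul]
    _ ≤ (4:ℝ) ^ m * (t ^ m * (1 - t) ^ m) := by
        refine mul_le_mul_of_nonneg_right (choose_sum_le m _ (Ico_subset_range m)) (by positivity)
    _ = (4 * (t * (1 - t))) ^ m := by rw [mul_pow, mul_pow]

lemma one_sub_AA_le_pow {m : ℕ} {t : ℝ} (ht : 1/2 ≤ t) (h1 : t ≤ 1) :
    1 - AA m t ≤ (4 * (t * (1 - t))) ^ m := by
  have h0 : (0:ℝ) ≤ t := by linarith
  have h1t : (0:ℝ) ≤ 1 - t := by linarith
  have hsplit : ∑ j ∈ range (m + 1), ((2 * m).choose j : ℝ) * t ^ j * (1 - t) ^ (2 * m - j)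
      + AA m t = 1 := by
    rw [AA, Finset.sum_range_add_sum_Ico _ (by omega : m + 1 ≤ 2 * m + 1)]
    exact binom_sum m t
  have hle : ∑ j ∈ range (m + 1), ((2 * m).choose j : ℝ) * t ^ j * (1 - t) ^ (2 * m - j)
      ≤ (4 * (t * (1 - t))) ^ m := by
    calc ∑ j ∈ range (m + 1), ((2 * m).choose j : ℝ) * t ^ j * (1 - t) ^ (2 * m - j)
        ≤ ∑ j ∈ range (m + 1), ((2 * m).choose j : ℝ) * (t ^ m * (1 - t) ^ m) := by
          refine Finset.sum_le_sum fun j hj => ?_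
          rw [Finset.mem_range] at hj
          rw [mul_assoc]
          refine mul_le_mul_of_nonneg_left ?_ (by positivity)
          exact term_le_mid_low ht h1 (by omega)
      _ = (∑ j ∈ range (m + 1), ((2 * m).choose j : ℝ)) * (t ^ m * (1 - t) ^ m) := by
          rw [Finset.sum_mul]
      _ ≤ (4:ℝ) ^ m * (t ^ m * (1 - t) ^ m) := by
          refine mul_le_mul_of_nonneg_right ?_ (by positivity)
          refine choose_sum_le m _ ?_
          intro j hj
          rw [Finset.mem_range] at hj ⊢
          omega
      _ = (4 * (t * (1 - t))) ^ m := by rw [mul_pow, mul_pow]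
  linarith

lemma AA_outer {m : ℕ} {t : ℝ} (h0 : 0 ≤ t) (ht : t ≤ 9/25) :
    AA m t ≤ (93/100 : ℝ) ^ m := by
  have h := AA_le_pow (m := m) h0 (by linarith : t ≤ 1/2)
  have hb : 4 * (t * (1 - t)) ≤ 93/100 := by nlinarith [mul_nonneg (sub_nonneg.mpr ht) (by linarith : (0:ℝ) ≤ 16/25 - t)]
  have hb0 : 0 ≤ 4 * (t * (1 - t)) := by
    have : t ≤ 1 := by linarith
    nlinarith
  calc AA m t ≤ (4 * (t * (1 - t))) ^ m := h
    _ ≤ (93/100 : ℝ) ^ m := pow_le_pow_left₀ hb0 hb m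

lemma AA_inner {m : ℕ} {t : ℝ} (ht : 64/81 ≤ t) (h1 : t ≤ 1) :
    1 - AA m t ≤ (67/100 : ℝ) ^ m := by
  have h := one_sub_AA_le_pow (m := m) (by linarith : 1/2 ≤ t) h1
  have hb : 4 * (t * (1 - t)) ≤ 67/100 := by
    nlinarith [mul_nonneg (sub_nonneg.mpr ht) (by linarith : (0:ℝ) ≤ t - 17/81)]
  have hb0 : 0 ≤ 4 * (t * (1 - t)) := by nlinarith
  calc 1 - AA m t ≤ (4 * (t * (1 - t))) ^ m := h
    _ ≤ (67/100 : ℝ) ^ m := pow_le_pow_left₀ hb0 hb m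

/-- The truncated arcsin Taylor polynomial. -/
noncomputable def Pp (d : ℕ) : Polynomial ℝ :=
  ∑ n ∈ range (d + 1), Polynomial.C (aa n / (2 * n + 1)) * Polynomial.X ^ (2 * n + 1)

/-- The window polynomial. -/
noncomputable def Wp (m : ℕ) : Polynomial ℝ :=
  ∑ j ∈ Finset.Ico (m + 1) (2 * m + 1),
    Polynomial.C (((2 * m).choose j : ℝ)) * ((1 - Polynomial.X ^ 2) ^ 2) ^ j
      * (1 - (1 - Polynomial.X ^ 2) ^ 2) ^ (2 * m - j)

lemma eval_Pp (d : ℕ) (x : ℝ) : (Pp d).eval x = pp d x := by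
  rw [Pp, pp, Polynomial.eval_finset_sum]
  refine Finset.sum_congr rfl fun n _ => ?_
  simp [Polynomial.eval_mul, Polynomial.eval_pow]

lemma eval_Wp (m : ℕ) (x : ℝ) : (Wp m).eval x = AA m ((1 - x ^ 2) ^ 2) := by
  rw [Wp, AA, Polynomial.eval_finset_sum]
  refine Finset.sum_congr rfl fun j _ => ?_
  simp [Polynomial.eval_mul, Polynomial.eval_pow, Polynomial.eval_sub]

lemma natDegree_Pp (d : ℕ) : (Pp d).natDegree ≤ 2 * d + 1 := by
  refine Polynomial.natDegree_sum_le_of_forall_le _ _ fun n hn => ?_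
  rw [Finset.mem_range] at hn
  calc (Polynomial.C (aa n / (2 * n + 1)) * Polynomial.X ^ (2 * n + 1)).natDegree
      ≤ (Polynomial.X ^ (2 * n + 1) : Polynomial ℝ).natDegree := Polynomial.natDegree_C_mul_le _ _
    _ ≤ 2 * n + 1 := le_of_eq (Polynomial.natDegree_X_pow _)
    _ ≤ 2 * d + 1 := by omega

lemma natDegree_Wp (m : ℕ) : (Wp m).natDegree ≤ 8 * m := by
  have hG : ((1 - Polynomial.X ^ 2 : Polynomial ℝ) ^ 2).natDegree ≤ 4 := by
    calc ((1 - Polynomial.X ^ 2 : Polynomial ℝ) ^ 2).natDegree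
        ≤ 2 * (1 - Polynomial.X ^ 2 : Polynomial ℝ).natDegree := Polynomial.natDegree_pow_le
      _ ≤ 2 * 2 := by
          have h1 : (1 - Polynomial.X ^ 2 : Polynomial ℝ).natDegree ≤ 2 := by
            refine le_trans (Polynomial.natDegree_sub_le _ _) ?_
            simp [Polynomial.natDegree_one, Polynomial.natDegree_X_pow]
          omega
      _ = 4 := rfl
  have hH : ((1 - (1 - Polynomial.X ^ 2) ^ 2 : Polynomial ℝ)).natDegree ≤ 4 := by
    refine le_trans (Polynomial.natDegree_sub_le _ _) ?_
    simp only [Polynomial.natDegree_one]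
    omega
  refine Polynomial.natDegree_sum_le_of_forall_le _ _ fun j hj => ?_
  rw [Finset.mem_Ico] at hj
  calc (Polynomial.C (((2 * m).choose j : ℝ)) * ((1 - Polynomial.X ^ 2) ^ 2) ^ j
        * (1 - (1 - Polynomial.X ^ 2) ^ 2) ^ (2 * m - j)).natDegree
      ≤ (Polynomial.C (((2 * m).choose j : ℝ)) * ((1 - Polynomial.X ^ 2) ^ 2) ^ j).natDegree
        + ((1 - (1 - Polynomial.X ^ 2) ^ 2 : Polynomial ℝ) ^ (2 * m - j)).natDegree :=
        Polynomial.natDegree_mul_le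
    _ ≤ (((1 - Polynomial.X ^ 2 : Polynomial ℝ) ^ 2) ^ j).natDegree
        + ((1 - (1 - Polynomial.X ^ 2) ^ 2 : Polynomial ℝ) ^ (2 * m - j)).natDegree := by
        have := Polynomial.natDegree_C_mul_le (((2 * m).choose j : ℝ))
          (((1 - Polynomial.X ^ 2 : Polynomial ℝ) ^ 2) ^ j)
        omega
    _ ≤ j * 4 + (2 * m - j) * 4 := by
        have h1 : (((1 - Polynomial.X ^ 2 : Polynomial ℝ) ^ 2) ^ j).natDegree
            ≤ j * ((1 - Polynomial.X ^ 2 : Polynomial ℝ) ^ 2).natDegree :=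
          Polynomial.natDegree_pow_le
        have h2 : ((1 - (1 - Polynomial.X ^ 2) ^ 2 : Polynomial ℝ) ^ (2 * m - j)).natDegree
            ≤ (2 * m - j) * ((1 - (1 - Polynomial.X ^ 2) ^ 2 : Polynomial ℝ)).natDegree :=
          Polynomial.natDegree_pow_le
        have h3 := hG
        have h4 := hH
        nlinarith [h1, h2]
    _ ≤ 8 * m := by omega

/-- The final approximating polynomial. -/
noncomputable def Fp (d m : ℕ) : Polynomial ℝ := Pp d * Wp m

lemma natDegree_Fp (d m : ℕ) : (Fp d m).natDegree ≤ 2 * d + 1 + 8 * m :=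
  le_trans Polynomial.natDegree_mul_le (by
    have := natDegree_Pp d
    have := natDegree_Wp m
    omega)

lemma eval_Fp (d m : ℕ) (x : ℝ) :
    (Fp d m).eval x = pp d x * AA m ((1 - x ^ 2) ^ 2) := by
  rw [Fp, Polynomial.eval_mul, eval_Pp, eval_Wp]

/-- Numeric: `(2d+3)^2 ≤ 9 * 3^d`. -/
lemma sq_le_pow3 (d : ℕ) : ((2 * (d:ℝ) + 3) ^ 2) ≤ 9 * 3 ^ d := by
  induction d with
  | zero => norm_num
  | succ d ih =>
    have h3 : (1:ℝ) ≤ (3:ℝ) ^ d := one_le_pow₀ (by norm_num)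
    push_cast
    push_cast at ih
    have hp : (3:ℝ) ^ (d + 1) = 3 * 3 ^ d := by rw [pow_succ]; ring
    nlinarith [Nat.cast_nonneg (α := ℝ) d, ih, h3, hp]

lemma err_le_third (d : ℕ) : (2 * (d:ℝ) + 3) ^ 2 * (1/9 : ℝ) ^ (d + 1) ≤ (1/3 : ℝ) ^ d := by
  have h := sq_le_pow3 d
  have h9 : ((1:ℝ)/9) ^ (d + 1) = (1/9) * (1/9) ^ d := by rw [pow_succ]; ring
  have hkey : (9 : ℝ) * 3 ^ d * ((1/9) ^ (d+1)) = (1/3) ^ d := by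
    rw [h9]
    have : (3:ℝ) ^ d * (1/9 : ℝ) ^ d = (1/3 : ℝ) ^ d := by
      rw [← mul_pow]; norm_num
    calc (9:ℝ) * 3 ^ d * ((1/9) * (1/9)^d) = (3:ℝ)^d * (1/9)^d := by ring
      _ = (1/3 : ℝ) ^ d := this
  calc (2 * (d:ℝ) + 3) ^ 2 * (1/9 : ℝ) ^ (d + 1)
      ≤ (9 : ℝ) * 3 ^ d * ((1/9) ^ (d+1)) := by
        refine mul_le_mul_of_nonneg_right h (by positivity)
    _ = (1/3 : ℝ) ^ d := hkey

lemma approx_abs (d : ℕ) {x : ℝ} (hx : |x| ≤ 1/3) :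
    |Real.arcsin x - pp d x| ≤ (1/3 : ℝ) ^ d := by
  have key : ∀ y : ℝ, 0 ≤ y → y ≤ 1/3 → |Real.arcsin y - pp d y| ≤ (1/3 : ℝ) ^ d := by
    intro y h0 h1
    have hlow := pp_le_arcsin d y ⟨h0, by linarith⟩
    have hup := arcsin_sub_pp_le d y ⟨h0, h1⟩
    have herr := err_le_third d
    rw [abs_le]
    constructor <;> linarith
  rcases le_or_gt 0 x with h | h
  · exact key x h (by rwa [abs_of_nonneg h] at hx)
  · have h2 : |Real.arcsin x - pp d x| = |Real.arcsin (-x) - pp d (-x)| := by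
      rw [Real.arcsin_neg, pp_odd, ← abs_neg]
      congr 1
      ring
    rw [h2]
    refine key (-x) (by linarith) ?_
    rw [abs_of_neg h] at hx
    linarith

lemma sin_one_gt : (3/4 : ℝ) < Real.sin 1 := by
  have := Real.sin_gt_sub_cube (by norm_num : (0:ℝ) < 1)
  norm_num at this
  linarith

lemma arcsin_le_one' {y : ℝ} (h : y ≤ 3/4) : Real.arcsin y ≤ 1 := by
  have hpi := Real.pi_gt_three
  calc Real.arcsin y ≤ Real.arcsin (Real.sin 1) :=
        Real.monotone_arcsin (le_trans h sin_one_gt.le)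
    _ = 1 := Real.arcsin_sin (by linarith) (by linarith)

lemma abs_arcsin_le_one {x : ℝ} (h : |x| ≤ 3/4) : |Real.arcsin x| ≤ 1 := by
  have h1 : Real.arcsin |x| ≤ 1 := arcsin_le_one' h
  have h2 : 0 ≤ Real.arcsin |x| := Real.arcsin_nonneg.mpr (abs_nonneg x)
  rcases le_or_gt 0 x with hx | hx
  · rw [abs_of_nonneg hx] at h1 h2
    rw [abs_of_nonneg h2]
    exact h1
  · rw [abs_of_neg hx] at h1 h2
    rw [Real.arcsin_neg] at h1 h2
    rw [abs_le]
    constructor <;> linarith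

lemma pow4016 : ((93:ℝ)/100) ^ 40 ≤ 1/16 := by norm_num

lemma Npow_le (N : ℕ) : ((N:ℝ) + 1) * ((1:ℝ)/16) ^ N ≤ 1 := by
  have h1 : (N:ℝ) + 1 ≤ (16:ℝ) ^ N := by
    have h2 : N + 1 ≤ 2 ^ N := Nat.lt_two_pow_self
    have h3 : (2:ℕ) ^ N ≤ 16 ^ N := Nat.pow_le_pow_left (by norm_num) N
    have h4 : ((N + 1 : ℕ) : ℝ) ≤ ((16 ^ N : ℕ) : ℝ) := by exact_mod_cast le_trans h2 h3
    push_cast at h4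
    linarith
  have h5 : (0:ℝ) < (16:ℝ) ^ N := by positivity
  have h6 : ((1:ℝ)/16) ^ N = ((16:ℝ) ^ N)⁻¹ := by
    rw [one_div, inv_pow]
  rw [h6]
  rw [mul_inv_le_iff₀ h5, one_mul]
  linarith

/-- Global boundedness of the final polynomial. -/
lemma Fp_bounded (N : ℕ) {x : ℝ} (hx : |x| ≤ 1) :
    |(Fp N (40 * N)).eval x| ≤ 1 := by
  set m := 40 * N with hm
  set t := (1 - x ^ 2) ^ 2 with htdef
  have hx2 : x ^ 2 ≤ 1 := by nlinarith [abs_nonneg x, sq_abs x, hx]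
  have hx20 : 0 ≤ x ^ 2 := sq_nonneg x
  have ht0 : 0 ≤ t := by positivity
  have ht1 : t ≤ 1 := by nlinarith
  have hW0 : 0 ≤ AA m t := AA_nonneg ht0 ht1
  have hW1 : AA m t ≤ 1 := AA_le_one ht0 ht1
  rw [eval_Fp, abs_mul, abs_of_nonneg hW0]
  rcases le_or_gt (x ^ 2) (2/5) with h | h
  · -- middle region : |pp| ≤ 1
    have hxabs : |x| ≤ 3/4 := by
      nlinarith [sq_abs x, abs_nonneg x]
    have hppx : |pp N x| ≤ 1 := by
      rw [pp_abs]
      calc pp N |x| ≤ Real.arcsin |x| := pp_le_arcsin N |x| ⟨abs_nonneg x, hxabs⟩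
        _ ≤ 1 := arcsin_le_one' hxabs
    calc |pp N x| * AA m t ≤ 1 * 1 := mul_le_mul hppx hW1 hW0 (by linarith)
      _ = 1 := by norm_num
  · -- outer region : window is tiny
    have ht925 : t ≤ 9/25 := by nlinarith
    have hWsmall : AA m t ≤ ((93:ℝ)/100) ^ m := AA_outer ht0 ht925
    have hppN : |pp N x| ≤ (N:ℝ) + 1 := pp_le_card hx
    have hchain : ((93:ℝ)/100) ^ m ≤ ((1:ℝ)/16) ^ N := by
      rw [hm, pow_mul]
      exact pow_le_pow_left₀ (by positivity) pow4016 N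
    calc |pp N x| * AA m t ≤ ((N:ℝ) + 1) * ((1:ℝ)/16) ^ N :=
          mul_le_mul hppN (le_trans hWsmall hchain) hW0 (by positivity)
      _ ≤ 1 := Npow_le N

end ArcsinApprox

open ArcsinApprox

/-- Core approximation result of the ancilla-free rotation-angle block-encoding lemma:
there are universal constants `C > 0` and `ε₀ ∈ (0,1)` such that for every `ε ∈ (0, ε₀)`
there is a real polynomial `F` of degree at most `C·log(1/ε)` with `|F| ≤ 1` on `[−1,1]`
and `|F(x) − arcsin(x)| ≤ ε` on `[−1/π, 1/π]`. -/
theorem arcsin_bounded_poly_approx :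
    ∃ C : ℝ, 0 < C ∧
      ∃ ε₀ : ℝ, ε₀ ∈ Set.Ioo (0 : ℝ) 1 ∧
        ∀ ε : ℝ, ε ∈ Set.Ioo (0 : ℝ) ε₀ →
          ∃ F : Polynomial ℝ,
            (F.natDegree : ℝ) ≤ C * Real.log (1 / ε) ∧
            (∀ x : ℝ, x ∈ Set.Icc (-1 : ℝ) 1 → |F.eval x| ≤ 1) ∧
            (∀ x : ℝ, x ∈ Set.Icc (-(1 / Real.pi)) (1 / Real.pi) →
              |F.eval x - Real.arcsin x| ≤ ε) := by
  refine ⟨2000, by norm_num, 1/100, by norm_num, ?_⟩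
  rintro ε ⟨hε0, hε1⟩
  -- logarithm facts
  have hl107 : (0:ℝ) < Real.log (10/7) := Real.log_pos (by norm_num)
  have hl107' : (1:ℝ)/3 ≤ Real.log (10/7) := by
    rw [Real.le_log_iff_exp_le (by norm_num : (0:ℝ) < 10/7)]
    have he : Real.exp (1/3 : ℝ) ^ (3:ℕ) = Real.exp 1 := by
      rw [← Real.exp_nat_mul]
      norm_num
    by_contra hcon
    push_neg at hcon
    have h2 : ((10:ℝ)/7) ^ (3:ℕ) < Real.exp (1/3 : ℝ) ^ (3:ℕ) :=
      pow_lt_pow_left₀ hcon (by norm_num) (by norm_num)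
    rw [he] at h2
    have := Real.exp_one_lt_d9
    norm_num at h2
    linarith
  have h2ε : (1:ℝ) < 2/ε := by
    rw [lt_div_iff₀ hε0]; linarith
  have hlog2ε : (0:ℝ) < Real.log (2/ε) := Real.log_pos h2ε
  set N := ⌈Real.log (2/ε) / Real.log (10/7)⌉₊ with hNdef
  -- the key geometric decay
  have hceil : Real.log (2/ε) / Real.log (10/7) ≤ (N:ℝ) := Nat.le_ceil _
  have hNlog : Real.log (2/ε) ≤ (N:ℝ) * Real.log (10/7) := by
    rwa [div_le_iff₀ hl107] at hceil
  have hgeom : ((7:ℝ)/10) ^ N ≤ ε/2 := by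
    have hlog710 : Real.log ((7:ℝ)/10) = - Real.log (10/7) := by
      rw [show ((7:ℝ)/10) = ((10:ℝ)/7)⁻¹ by norm_num, Real.log_inv]
    have hlogε2 : Real.log (ε/2) = - Real.log (2/ε) := by
      rw [show (ε/2 : ℝ) = ((2:ℝ)/ε)⁻¹ by rw [inv_div], Real.log_inv]
    have hlogle : Real.log (((7:ℝ)/10) ^ N) ≤ Real.log (ε/2) := by
      rw [Real.log_pow, hlog710, hlogε2]
      push_cast
      nlinarith [hNlog]
    have hexp := Real.exp_le_exp.mpr hlogle
    rwa [Real.exp_log (by positivity), Real.exp_log (by positivity)] at hexp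
  refine ⟨Fp N (40 * N), ?_, ?_, ?_⟩
  · -- degree bound
    have hdeg := natDegree_Fp N (40 * N)
    have hdegN : (Fp N (40 * N)).natDegree ≤ 322 * N + 1 := by omega
    have hdegR : ((Fp N (40 * N)).natDegree : ℝ) ≤ 322 * (N:ℝ) + 1 := by
      exact_mod_cast hdegN
    have hNup : (N:ℝ) < Real.log (2/ε) / Real.log (10/7) + 1 :=
      Nat.ceil_lt_add_one (le_of_lt (div_pos hlog2ε hl107))
    have hdivle : Real.log (2/ε) / Real.log (10/7) ≤ 3 * Real.log (2/ε) := by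
      rw [div_le_iff₀ hl107]
      nlinarith [hlog2ε, hl107']
    have hlogsplit : Real.log (2/ε) = Real.log 2 + Real.log (1/ε) := by
      rw [show (2/ε:ℝ) = 2 * (1/ε) by ring, Real.log_mul (by norm_num) (by positivity)]
    have hL4 : (4:ℝ) ≤ Real.log (1/ε) := by
      rw [Real.le_log_iff_exp_le (by positivity)]
      have h100 : (100:ℝ) ≤ 1/ε := by
        rw [le_div_iff₀ hε0]; linarith
      have h4 : Real.exp (4:ℝ) = Real.exp 1 ^ (4:ℕ) := by
        rw [← Real.exp_nat_mul]; norm_num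
      have h5 : Real.exp 1 ^ (4:ℕ) ≤ (2.7182818286:ℝ) ^ (4:ℕ) :=
        pow_le_pow_left₀ (Real.exp_pos 1).le Real.exp_one_lt_d9.le 4
      have h6 : (2.7182818286:ℝ) ^ (4:ℕ) ≤ 100 := by norm_num
      linarith [h4 ▸ le_trans h5 h6]
    have hlog2 := Real.log_two_lt_d9
    linarith [hdegR, hNup, hdivle, hlogsplit, hL4, hlog2]
  · -- boundedness on [-1,1]
    rintro x ⟨hx1, hx2⟩
    exact Fp_bounded N (abs_le.mpr ⟨hx1, hx2⟩)
  · -- approximation on [-1/π, 1/π]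
    rintro x ⟨hx1, hx2⟩
    have hpi := Real.pi_gt_three
    have hpipos : (0:ℝ) < Real.pi := by linarith
    have hx13 : |x| ≤ 1/3 := by
      have h1 : 1/Real.pi ≤ 1/3 := by
        rw [div_le_div_iff₀ hpipos (by norm_num)]; linarith
      rw [abs_le]
      constructor <;> linarith
    have hxsq : x ^ 2 ≤ 1/9 := by nlinarith [sq_abs x, abs_nonneg x]
    have hxsq0 : (0:ℝ) ≤ x ^ 2 := sq_nonneg x
    set m := 40 * N with hm
    set t := (1 - x ^ 2) ^ 2 with htdef
    have ht0 : 0 ≤ t := by positivity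
    have ht1 : t ≤ 1 := by nlinarith
    have htlow : 64/81 ≤ t := by nlinarith
    have hW1 : AA m t ≤ 1 := AA_le_one ht0 ht1
    have hW0 : 0 ≤ AA m t := AA_nonneg ht0 ht1
    have hWin : 1 - AA m t ≤ ((67:ℝ)/100) ^ m := AA_inner htlow ht1
    have happ : |Real.arcsin x - pp N x| ≤ ((1:ℝ)/3) ^ N := approx_abs N hx13
    have harc : |Real.arcsin x| ≤ 1 := abs_arcsin_le_one (by linarith : |x| ≤ 3/4)
    have hp1 : ((1:ℝ)/3) ^ N ≤ ((7:ℝ)/10) ^ N :=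
      pow_le_pow_left₀ (by norm_num) (by norm_num) N
    have hp2 : ((67:ℝ)/100) ^ m ≤ ((7:ℝ)/10) ^ N := by
      calc ((67:ℝ)/100) ^ m ≤ ((67:ℝ)/100) ^ N :=
            pow_le_pow_of_le_one (by norm_num) (by norm_num) (by omega)
        _ ≤ ((7:ℝ)/10) ^ N := pow_le_pow_left₀ (by norm_num) (by norm_num) N
    rw [eval_Fp]
    have hsplit : pp N x * AA m t - Real.arcsin x
        = (pp N x - Real.arcsin x) * AA m t + Real.arcsin x * (AA m t - 1) := by ring
    calc |pp N x * AA m t - Real.arcsin x|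
        ≤ |(pp N x - Real.arcsin x) * AA m t| + |Real.arcsin x * (AA m t - 1)| := by
          rw [hsplit]; exact abs_add_le _ _
      _ = |pp N x - Real.arcsin x| * AA m t + |Real.arcsin x| * (1 - AA m t) := by
          rw [abs_mul, abs_mul, abs_of_nonneg hW0,
            abs_of_nonpos (by linarith : AA m t - 1 ≤ 0)]
          ring
      _ ≤ ((1:ℝ)/3) ^ N * 1 + 1 * ((67:ℝ)/100) ^ m := by
          refine add_le_add ?_ ?_
          · refine mul_le_mul ?_ hW1 hW0 (by positivity)
            rw [abs_sub_comm]
            exact happ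
          · exact mul_le_mul harc hWin (by linarith) (by norm_num)
      _ ≤ ε/2 + ε/2 := by
          have e1 : ((1:ℝ)/3) ^ N * 1 ≤ ε/2 := by
            rw [mul_one]; linarith [hp1, hgeom]
          have e2 : (1:ℝ) * ((67:ℝ)/100) ^ m ≤ ε/2 := by
            rw [one_mul]; linarith [hp2, hgeom]
          linarith
      _ = ε := by ring
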